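/- MS4.t has the finite model property: for every formula φ of the language L_T∀, if MS4.t ⊬ φ, then there exist a finite MS4.t-algebra (B,□_F,□_P,∀) and an assignment of elements of B to the propositional letters under which the induced value of φ in B is different from the top element 1. -/

import Mathlib

/-- Formulas of the language `L_T∀` with modalities `□_F`, `□_P`, `∀`. -/
inductive AForm : Type
  | var : Nat → AForm
  | bot : AForm
  | and : AForm → AForm → AForm
  | or  : AForm → AForm → AForm
  | imp : AForm → AForm → AForm
  | boxF : AForm → AForm
  | boxP : AForm → AForm
  | fa   : AForm → AForm

def AForm.neg (φ : AForm) : AForm := φ.imp AForm.bot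
def AForm.iff (φ ψ : AForm) : AForm := (φ.imp ψ).and (ψ.imp φ)
/-- `◇_F φ := ¬□_F¬φ`. -/
def AForm.diaF (φ : AForm) : AForm := ((φ.neg).boxF).neg
/-- `◇_P φ := ¬□_P¬φ`. -/
def AForm.diaP (φ : AForm) : AForm := ((φ.neg).boxP).neg
/-- `∃φ := ¬∀¬φ`. -/
def AForm.exq (φ : AForm) : AForm := ((φ.neg).fa).neg

/-- The tense `MS4` logic `MS4.t`: classical logic with S4-axioms for `□_F` and
`□_P`, the tense axioms `p → □_P◇_F p` and `p → □_F◇_P p`, the S5-axioms for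
`∀`, and the left commutativity axiom `□_F∀p → ∀□_F p`, closed under modus
ponens and the three necessitation rules (axioms are given as schemes, hence
closure under uniform substitution is automatic). -/
inductive MS4t : AForm → Prop
  -- classical propositional axioms
  | a1 (φ ψ : AForm) : MS4t (φ.imp (ψ.imp φ))
  | a2 (φ ψ χ : AForm) : MS4t ((φ.imp (ψ.imp χ)).imp ((φ.imp ψ).imp (φ.imp χ)))
  | a3 (φ ψ : AForm) : MS4t ((φ.and ψ).imp φ)
  | a4 (φ ψ : AForm) : MS4t ((φ.and ψ).imp ψ)
  | a5 (φ ψ : AForm) : MS4t (φ.imp (ψ.imp (φ.and ψ)))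
  | a6 (φ ψ : AForm) : MS4t (φ.imp (φ.or ψ))
  | a7 (φ ψ : AForm) : MS4t (ψ.imp (φ.or ψ))
  | a8 (φ ψ χ : AForm) : MS4t ((φ.imp χ).imp ((ψ.imp χ).imp ((φ.or ψ).imp χ)))
  | a9 (φ : AForm) : MS4t (AForm.bot.imp φ)
  | dne (φ : AForm) : MS4t ((φ.neg.neg).imp φ)
  -- S4-axioms for □_F
  | bFK (φ ψ : AForm) : MS4t (((φ.imp ψ).boxF).imp ((φ.boxF).imp ψ.boxF))
  | bFT (φ : AForm) : MS4t ((φ.boxF).imp φ)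
  | bF4 (φ : AForm) : MS4t ((φ.boxF).imp φ.boxF.boxF)
  -- S4-axioms for □_P
  | bPK (φ ψ : AForm) : MS4t (((φ.imp ψ).boxP).imp ((φ.boxP).imp ψ.boxP))
  | bPT (φ : AForm) : MS4t ((φ.boxP).imp φ)
  | bP4 (φ : AForm) : MS4t ((φ.boxP).imp φ.boxP.boxP)
  -- tense axioms
  | tense1 (φ : AForm) : MS4t (φ.imp ((φ.diaF).boxP))
  | tense2 (φ : AForm) : MS4t (φ.imp ((φ.diaP).boxF))
  -- S5-axioms for ∀
  | faK (φ ψ : AForm) : MS4t (((φ.imp ψ).fa).imp ((φ.fa).imp ψ.fa))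
  | faT (φ : AForm) : MS4t ((φ.fa).imp φ)
  | fa4 (φ : AForm) : MS4t ((φ.fa).imp φ.fa.fa)
  | faB (φ : AForm) : MS4t (φ.imp (φ.exq.fa))
  -- left commutativity axiom
  | comm (φ : AForm) : MS4t ((φ.fa.boxF).imp (φ.boxF.fa))
  -- rules
  | mp (φ ψ : AForm) : MS4t (φ.imp ψ) → MS4t φ → MS4t ψ
  | necF (φ : AForm) : MS4t φ → MS4t φ.boxF
  | necP (φ : AForm) : MS4t φ → MS4t φ.boxP
  | necFa (φ : AForm) : MS4t φ → MS4t φ.fa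

/-- `(B,□)` is an S4-algebra (interior algebra). -/
structure IsS4 {B : Type} [BooleanAlgebra B] (box : B → B) : Prop where
  map_inf : ∀ a b : B, box (a ⊓ b) = box a ⊓ box b
  map_top : box ⊤ = ⊤
  le_self : ∀ a : B, box a ≤ a
  le_idem : ∀ a : B, box a ≤ box (box a)

/-- `(B,∀)` is an S5-algebra (monadic algebra): an S4-algebra satisfying
`a ≤ ∀∃a`, where `∃a = ¬∀¬a`. -/
structure IsS5 {B : Type} [BooleanAlgebra B] (fa : B → B) : Prop where
  s4 : IsS4 fa
  sym : ∀ a : B, a ≤ fa ((fa aᶜ)ᶜ)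

/-- `(B,■_F,■_P)` is an S4.t-algebra: two S4-operators linked by the tense
inequalities `a ≤ ■_P◆_F a` and `a ≤ ■_F◆_P a`. -/
structure IsS4t {B : Type} [BooleanAlgebra B] (bF bP : B → B) : Prop where
  s4F : IsS4 bF
  s4P : IsS4 bP
  pf : ∀ a : B, a ≤ bP ((bF aᶜ)ᶜ)
  fp : ∀ a : B, a ≤ bF ((bP aᶜ)ᶜ)

/-- `(B,□,∀)` is an MS4-algebra. -/
structure IsMS4 {B : Type} [BooleanAlgebra B] (box fa : B → B) : Prop where
  s4 : IsS4 box
  s5 : IsS5 fa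
  comm : ∀ a : B, box (fa a) ≤ fa (box a)

/-- `(B,□_F,□_P,∀)` is an MS4.t-algebra. -/
structure IsMS4t {B : Type} [BooleanAlgebra B] (bF bP fa : B → B) : Prop where
  s4t : IsS4t bF bP
  ms4 : IsMS4 bF fa

/-- The value of an `L_T∀`-formula in an algebra `(B,□_F,□_P,∀)` under an
assignment `v` of elements of `B` to the propositional letters. -/
def aeval {B : Type} [BooleanAlgebra B] (bF bP fa : B → B) (v : Nat → B) :
    AForm → B
  | .var n => v n
  | .bot => ⊥
  | .and φ ψ => aeval bF bP fa v φ ⊓ aeval bF bP fa v ψ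
  | .or φ ψ => aeval bF bP fa v φ ⊔ aeval bF bP fa v ψ
  | .imp φ ψ => (aeval bF bP fa v φ)ᶜ ⊔ aeval bF bP fa v ψ
  | .boxF φ => bF (aeval bF bP fa v φ)
  | .boxP φ => bP (aeval bF bP fa v φ)
  | .fa φ => fa (aeval bF bP fa v φ)

/-!
The Lindenbaum–Tarski algebra of `MS4.t` is an MS4.t-algebra in which `φ` takes a value `≠ ⊤`
under the canonical assignment. Monadic algebras are locally finite, so the values of the
subformulas of `φ` lie in a finite Boolean subalgebra `D` closed under `∀`. On the atoms of `D`
let `R` be the reflexive-transitive closure of `x ⊓ ◇_F y ≠ ⊥` and let `x E y` mean `x ⊓ ∃y ≠ ⊥`.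
`E` is an equivalence because `D` is closed under `∀`, and the left commutativity axiom turns
`x E x' R y'` into `x R y E y'` for some `y`. So the box operators of `R`, of its converse and of
`E` make the powerset of the atoms a finite MS4.t-algebra, and sending an element to the set of
atoms below it preserves the values of all subformulas of `φ`.
-/

/-- Necessitation is not applied to hypotheses: this is what makes the deduction theorem hold. -/
inductive Proves : List AForm → AForm → Prop
  | thm {Γ : List AForm} {φ : AForm} : MS4t φ → Proves Γ φ
  | hyp {Γ : List AForm} {φ : AForm} : φ ∈ Γ → Proves Γ φ
  | mp {Γ : List AForm} {φ ψ : AForm} : Proves Γ (φ.imp ψ) → Proves Γ φ → Proves Γ ψ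

namespace Proves

variable {Γ : List AForm} {φ ψ χ : AForm}

theorem ms4t_of_nil (h : Proves [] φ) : MS4t φ := by
  generalize hΓ : [] = Γ at h
  induction h with
  | thm h => exact h
  | hyp h => subst hΓ; simp at h
  | mp _ _ ih₁ ih₂ => exact MS4t.mp _ _ ih₁ ih₂

theorem imp_self (Γ : List AForm) (φ : AForm) : Proves Γ (φ.imp φ) :=
  mp (mp (thm (MS4t.a2 φ (φ.imp φ) φ)) (thm (MS4t.a1 φ (φ.imp φ)))) (thm (MS4t.a1 φ φ))

theorem deduction (h : Proves (φ :: Γ) ψ) : Proves Γ (φ.imp ψ) := by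
  generalize hΔ : φ :: Γ = Δ at h
  induction h with
  | @thm χ h => exact mp (thm (MS4t.a1 χ φ)) (thm h)
  | @hyp χ h =>
    subst hΔ
    rcases List.mem_cons.1 h with rfl | h
    · exact imp_self Γ χ
    · exact mp (thm (MS4t.a1 χ φ)) (hyp h)
  | @mp α β _ _ ih₁ ih₂ => exact mp (mp (thm (MS4t.a2 φ α β)) ih₁) ih₂

theorem head : Proves (φ :: Γ) φ := hyp List.mem_cons_self

theorem head_tail : Proves (ψ :: φ :: Γ) φ := hyp (by simp)

theorem and_intro (h₁ : Proves Γ φ) (h₂ : Proves Γ ψ) : Proves Γ (φ.and ψ) :=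
  mp (mp (thm (MS4t.a5 φ ψ)) h₁) h₂

theorem and_left (h : Proves Γ (φ.and ψ)) : Proves Γ φ := mp (thm (MS4t.a3 φ ψ)) h

theorem and_right (h : Proves Γ (φ.and ψ)) : Proves Γ ψ := mp (thm (MS4t.a4 φ ψ)) h

theorem or_inl (h : Proves Γ φ) : Proves Γ (φ.or ψ) := mp (thm (MS4t.a6 φ ψ)) h

theorem or_inr (h : Proves Γ ψ) : Proves Γ (φ.or ψ) := mp (thm (MS4t.a7 φ ψ)) h

theorem or_elim (h : Proves Γ (φ.or ψ)) (h₁ : Proves (φ :: Γ) χ)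
    (h₂ : Proves (ψ :: Γ) χ) : Proves Γ χ :=
  mp (mp (mp (thm (MS4t.a8 φ ψ χ)) (deduction h₁)) (deduction h₂)) h

theorem absurd (h₁ : Proves Γ φ.neg) (h₂ : Proves Γ φ) : Proves Γ χ :=
  mp (thm (MS4t.a9 χ)) (mp h₁ h₂)

theorem em (Γ : List AForm) (φ : AForm) : Proves Γ (φ.or φ.neg) :=
  mp (thm (MS4t.dne _)) <| deduction <| mp head <| or_inr <| deduction <|
    mp head_tail (or_inl head)

end Proves

theorem ms4t_top : MS4t AForm.bot.neg := (Proves.imp_self [] _).ms4t_of_nil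

def ProvImp (φ ψ : AForm) : Prop := MS4t (φ.imp ψ)

namespace ProvImp

variable {Γ : List AForm} {φ φ' ψ ψ' χ : AForm}

theorem of_proves (h : Proves [φ] ψ) : ProvImp φ ψ := h.deduction.ms4t_of_nil

theorem mp (h : ProvImp φ ψ) (hφ : Proves Γ φ) : Proves Γ ψ := .mp (.thm h) hφ

theorem refl (φ : AForm) : ProvImp φ φ := (Proves.imp_self [] φ).ms4t_of_nil

theorem trans (h₁ : ProvImp φ ψ) (h₂ : ProvImp ψ χ) : ProvImp φ χ :=
  of_proves (h₂.mp (h₁.mp .head))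

theorem of_ms4t (h : MS4t ψ) : ProvImp φ ψ := MS4t.mp _ _ (MS4t.a1 ψ φ) h

theorem and (h₁ : ProvImp φ φ') (h₂ : ProvImp ψ ψ') : ProvImp (φ.and ψ) (φ'.and ψ') :=
  of_proves (.and_intro (h₁.mp (.and_left .head)) (h₂.mp (.and_right .head)))

theorem or (h₁ : ProvImp φ φ') (h₂ : ProvImp ψ ψ') : ProvImp (φ.or ψ) (φ'.or ψ') :=
  of_proves (.or_elim .head (.or_inl (h₁.mp .head)) (.or_inr (h₂.mp .head)))

theorem neg (h : ProvImp φ' φ) : ProvImp φ.neg φ'.neg :=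
  of_proves (.deduction (.mp .head_tail (h.mp .head)))

end ProvImp

structure NormalModality (m : AForm → AForm) : Prop where
  K : ∀ φ ψ, MS4t ((m (φ.imp ψ)).imp ((m φ).imp (m ψ)))
  nec : ∀ φ, MS4t φ → MS4t (m φ)

namespace NormalModality

variable {m : AForm → AForm} (hm : NormalModality m) {φ ψ : AForm}
include hm

theorem mono (h : ProvImp φ ψ) : ProvImp (m φ) (m ψ) := MS4t.mp _ _ (hm.K φ ψ) (hm.nec _ h)

theorem and_le : ProvImp ((m φ).and (m ψ)) (m (φ.and ψ)) :=
  ProvImp.of_proves <|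
    .mp (.mp (.thm (hm.K ψ _)) ((hm.mono (MS4t.a5 φ ψ)).mp (.and_left .head))) (.and_right .head)

end NormalModality

theorem normalModality_boxF : NormalModality AForm.boxF := ⟨MS4t.bFK, MS4t.necF⟩
theorem normalModality_boxP : NormalModality AForm.boxP := ⟨MS4t.bPK, MS4t.necP⟩
theorem normalModality_fa : NormalModality AForm.fa := ⟨MS4t.faK, MS4t.necFa⟩

def provEquiv : Setoid AForm where
  r φ ψ := ProvImp φ ψ ∧ ProvImp ψ φ
  iseqv := ⟨fun φ => ⟨.refl φ, .refl φ⟩, fun h => ⟨h.2, h.1⟩,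
    fun h₁ h₂ => ⟨h₁.1.trans h₂.1, h₂.2.trans h₁.2⟩⟩

def Lindenbaum : Type := Quotient provEquiv

namespace Lindenbaum

def mk (φ : AForm) : Lindenbaum := Quotient.mk provEquiv φ

theorem ind {p : Lindenbaum → Prop} (h : ∀ φ, p (mk φ)) (a : Lindenbaum) : p a :=
  Quotient.ind h a

theorem ind₂ {p : Lindenbaum → Lindenbaum → Prop} (h : ∀ φ ψ, p (mk φ) (mk ψ))
    (a b : Lindenbaum) : p a b :=
  Quotient.ind₂ h a b

theorem ind₃ {p : Lindenbaum → Lindenbaum → Lindenbaum → Prop}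
    (h : ∀ φ ψ χ, p (mk φ) (mk ψ) (mk χ)) (a b c : Lindenbaum) : p a b c :=
  Quotient.ind (motive := fun a => p a b c) (fun _ => Quotient.ind₂ (fun _ _ => h _ _ _) b c) a

theorem mk_eq_mk {φ ψ : AForm} (h₁ : ProvImp φ ψ) (h₂ : ProvImp ψ φ) : mk φ = mk ψ :=
  Quotient.sound ⟨h₁, h₂⟩

instance : BooleanAlgebra Lindenbaum where
  le := Quotient.lift₂ ProvImp fun _ _ _ _ h₁ h₂ =>
    propext ⟨fun h => (h₁.2.trans h).trans h₂.1, fun h => (h₁.1.trans h).trans h₂.2⟩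
  le_refl := ind ProvImp.refl
  le_trans := ind₃ fun _ _ _ => ProvImp.trans
  le_antisymm := ind₂ fun _ _ => mk_eq_mk
  sup := Quotient.map₂ AForm.or fun _ _ h₁ _ _ h₂ =>
    ⟨h₁.1.or h₂.1, h₁.2.or h₂.2⟩
  inf := Quotient.map₂ AForm.and fun _ _ h₁ _ _ h₂ =>
    ⟨h₁.1.and h₂.1, h₁.2.and h₂.2⟩
  compl := Quotient.map AForm.neg fun _ _ h => ⟨ProvImp.neg h.2, ProvImp.neg h.1⟩
  top := mk AForm.bot.neg
  bot := mk AForm.bot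
  le_sup_left := ind₂ MS4t.a6
  le_sup_right := ind₂ MS4t.a7
  sup_le := ind₃ fun _ _ _ h₁ h₂ => MS4t.mp _ _ (MS4t.mp _ _ (MS4t.a8 _ _ _) h₁) h₂
  inf_le_left := ind₂ MS4t.a3
  inf_le_right := ind₂ MS4t.a4
  le_inf := ind₃ fun _ _ _ h₁ h₂ =>
    ProvImp.of_proves (.and_intro (h₁.mp .head) (h₂.mp .head))
  le_sup_inf := ind₃ fun _ _ _ => ProvImp.of_proves <|
    .or_elim (.and_left .head) (.or_inl .head) <|
      .or_elim (.and_right .head_tail) (.or_inl .head) (.or_inr (.and_intro .head_tail .head))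
  inf_compl_le_bot := ind fun _ => ProvImp.of_proves (.mp (.and_right .head) (.and_left .head))
  top_le_sup_compl := ind fun φ => ProvImp.of_proves (.em _ φ)
  le_top := ind fun _ => ProvImp.of_ms4t ms4t_top
  bot_le := ind MS4t.a9

theorem mk_le_mk {φ ψ : AForm} : mk φ ≤ mk ψ ↔ ProvImp φ ψ := Iff.rfl

theorem mk_imp (φ ψ : AForm) : mk (φ.imp ψ) = (mk φ)ᶜ ⊔ mk ψ :=
  mk_eq_mk
    (ProvImp.of_proves (.or_elim (.em _ φ) (.or_inr (.mp .head_tail .head)) (.or_inl .head)))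
    (ProvImp.of_proves (.deduction (.or_elim .head_tail (.absurd .head .head_tail) .head)))

theorem mk_eq_top {φ : AForm} (h : mk φ = ⊤) : MS4t φ :=
  MS4t.mp _ _ (mk_le_mk.1 (h ▸ le_refl (⊤ : Lindenbaum)) : ProvImp AForm.bot.neg φ) ms4t_top

def lift {m : AForm → AForm} (hm : NormalModality m) : Lindenbaum → Lindenbaum :=
  Quotient.map m fun _ _ h => ⟨hm.mono h.1, hm.mono h.2⟩

theorem isS4_lift {m : AForm → AForm} (hm : NormalModality m) (hT : ∀ φ, MS4t ((m φ).imp φ))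
    (h4 : ∀ φ, MS4t ((m φ).imp (m (m φ)))) : IsS4 (lift hm) where
  map_inf := ind₂ fun _ _ => le_antisymm
    (le_inf (hm.mono (MS4t.a3 _ _)) (hm.mono (MS4t.a4 _ _))) hm.and_le
  map_top := top_le_iff.1 (ProvImp.of_ms4t (hm.nec _ ms4t_top))
  le_self := ind hT
  le_idem := ind h4

def boxF : Lindenbaum → Lindenbaum := lift normalModality_boxF
def boxP : Lindenbaum → Lindenbaum := lift normalModality_boxP
def fa : Lindenbaum → Lindenbaum := lift normalModality_fa

theorem isMS4t : IsMS4t boxF boxP fa where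
  s4t :=
  { s4F := isS4_lift _ MS4t.bFT MS4t.bF4
    s4P := isS4_lift _ MS4t.bPT MS4t.bP4
    pf := ind MS4t.tense1
    fp := ind MS4t.tense2 }
  ms4 :=
  { s4 := isS4_lift _ MS4t.bFT MS4t.bF4
    s5 := ⟨isS4_lift _ MS4t.faT MS4t.fa4, ind MS4t.faB⟩
    comm := ind MS4t.comm }

theorem aeval_mk (φ : AForm) : aeval boxF boxP fa (fun n => mk (.var n)) φ = mk φ := by
  induction φ with
  | var n => rfl
  | bot => rfl
  | and φ ψ ih₁ ih₂ | or φ ψ ih₁ ih₂ => simp only [aeval, ih₁, ih₂]; rfl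
  | imp φ ψ ih₁ ih₂ => simp only [aeval, ih₁, ih₂, mk_imp]
  | boxF φ ih | boxP φ ih | fa φ ih => simp only [aeval, ih]; rfl

end Lindenbaum

section ModalAlgebra

variable {B : Type} [BooleanAlgebra B]

def dia (box : B → B) (a : B) : B := (box aᶜ)ᶜ

theorem disjoint_dia_iff {box : B → B} {x y : B} : Disjoint x (dia box y) ↔ x ≤ box yᶜ := by
  rw [dia, ← le_compl_iff_disjoint_right, compl_compl]

namespace IsS4

variable {box : B → B} (h : IsS4 box) {a b x y : B}
include h

theorem mono (hab : a ≤ b) : box a ≤ box b := by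
  simpa only [inf_eq_left.2 hab] using (h.map_inf a b).le.trans inf_le_right

theorem dia_mono (hab : a ≤ b) : dia box a ≤ dia box b :=
  compl_le_compl (h.mono (compl_le_compl hab))

theorem le_dia (a : B) : a ≤ dia box a := le_compl_comm.1 (h.le_self aᶜ)

theorem dia_bot : dia box ⊥ = ⊥ := by simp [dia, h.map_top]

theorem dia_sup (a b : B) : dia box (a ⊔ b) = dia box a ⊔ dia box b := by
  simp only [dia, compl_sup, h.map_inf, compl_inf]

theorem dia_dia_le (a : B) : dia box (dia box a) ≤ dia box a := by
  simpa only [dia, compl_compl] using compl_le_compl (h.le_idem aᶜ)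

theorem box_inf_dia_le (a b : B) : box a ⊓ dia box b ≤ dia box (a ⊓ b) := by
  unfold dia
  rw [le_compl_iff_disjoint_right, disjoint_iff_inf_le]
  calc box a ⊓ (box bᶜ)ᶜ ⊓ box (a ⊓ b)ᶜ
      = box (a ⊓ (a ⊓ b)ᶜ) ⊓ (box bᶜ)ᶜ := by rw [h.map_inf]; ac_rfl
    _ ≤ box bᶜ ⊓ (box bᶜ)ᶜ := inf_le_inf_right _ (h.mono (by simp [inf_sup_left]))
    _ = ⊥ := inf_compl_self _

theorem not_disjoint_box (hx : x ≤ box a) (hxy : ¬Disjoint x (dia box y)) :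
    ¬Disjoint (box a) y := fun hay => hxy <| disjoint_iff_inf_le.2 <|
  calc x ⊓ dia box y ≤ box (box a) ⊓ dia box y := inf_le_inf_right _ (hx.trans (h.le_idem a))
    _ ≤ dia box (box a ⊓ y) := h.box_inf_dia_le _ _
    _ = ⊥ := by rw [hay.eq_bot, h.dia_bot]

theorem disjoint_dia_of_disjoint_dia {box' : B → B} (hconj : ∀ a, a ≤ box (dia box' a))
    (hyx : Disjoint y (dia box' x)) : Disjoint x (dia box y) := disjoint_iff_inf_le.2 <|
  calc x ⊓ dia box y ≤ box (dia box' x) ⊓ dia box y := inf_le_inf_right _ (hconj x)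
    _ ≤ dia box (dia box' x ⊓ y) := h.box_inf_dia_le _ _
    _ = ⊥ := by rw [inf_comm, hyx.eq_bot, h.dia_bot]

end IsS4

namespace IsS5

variable {fa : B → B} (h : IsS5 fa) {c : B}
include h

theorem dia_fa_le (a : B) : dia fa (fa a) ≤ a := by
  simpa only [dia, compl_compl] using compl_le_compl (h.sym aᶜ)

theorem fa_compl_of_fa_eq (hc : fa c = c) : fa cᶜ = cᶜ := by
  refine le_antisymm (h.s4.le_self _) ?_
  simpa only [dia, compl_compl, hc] using h.sym cᶜ

theorem dia_inf_of_fa_eq (hc : fa c = c) (a : B) : dia fa (a ⊓ c) = dia fa a ⊓ c := by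
  refine le_antisymm (le_inf (h.s4.dia_mono inf_le_left) ?_) ?_
  · simpa only [dia, h.fa_compl_of_fa_eq hc, compl_compl] using
      h.s4.dia_mono (inf_le_right (a := a) (b := c))
  · simpa only [hc, inf_comm] using h.s4.box_inf_dia_le c a

end IsS5

theorem IsMS4.not_disjoint_dia_dia {bF fa : B → B} (h : IsMS4 bF fa) {x y : B}
    (hxy : ¬Disjoint (dia fa x) (dia bF y)) : ¬Disjoint x (dia bF (dia fa y)) := by
  rw [disjoint_dia_iff] at hxy ⊢
  intro hx
  refine hxy ?_
  calc dia fa x ≤ dia fa (fa (bF yᶜ)) := h.s5.s4.dia_mono (hx.trans ?_)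
    _ ≤ bF yᶜ := h.s5.dia_fa_le _
  simpa only [dia, compl_compl] using h.comm yᶜ

end ModalAlgebra

section FiniteSubalgebra

theorem atom_sup_induction {α : Type*} [BooleanAlgebra α] [Finite α] {p : α → Prop}
    (bot : p ⊥) (atom : ∀ a, IsAtom a → p a) (sup : ∀ a b, p a → p b → p (a ⊔ b))
    (e : α) : p e := by
  induction e using WellFoundedLT.induction with
  | _ e ih =>
  by_cases he : IsAtom e
  · exact atom e he
  rcases eq_or_ne e ⊥ with rfl | hne
  · exact bot
  obtain ⟨b, hbe, hb⟩ : ∃ b < e, b ≠ ⊥ := by simpa [IsAtom, hne] using he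
  rw [← sup_sdiff_cancel_right hbe.le]
  exact sup _ _ (ih b hbe) (ih _ (sdiff_lt hbe.le hb))

namespace BooleanSubalgebra

variable {B : Type} [BooleanAlgebra B] {L : BooleanSubalgebra B}

theorem finite_closure {s : Set B} (hs : s.Finite) : (closure s : Set B).Finite := by
  set t := latticeClosure (insert ⊥ (insert ⊤ s))
  have ht : t.Finite := ((hs.insert ⊤).insert ⊥).latticeClosure
  have hbot : ⊥ ∈ t := subset_latticeClosure (by simp)
  have htop : ⊤ ∈ t := subset_latticeClosure (by simp)
  have hts : closure t = closure s := by
    rw [closure_latticeClosure]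
    refine le_antisymm ?_ (closure_mono ((Set.subset_insert _ _).trans (Set.subset_insert _ _)))
    exact closure_le.2 (Set.insert_subset bot_mem (Set.insert_subset top_mem subset_closure))
  have := ht.to_subtype
  refine (Set.finite_range fun u : Finset (t × t) => u.sup fun x => (x.1 : B) \ x.2).subset ?_
  intro a ha
  rw [← hts, SetLike.mem_coe,
    mem_closure_iff_sup_sdiff isSublattice_latticeClosure hbot htop] at ha
  obtain ⟨u, rfl⟩ := ha
  exact ⟨u, rfl⟩

theorem le_of_not_disjoint {a : L} (ha : IsAtom a) {x : B} (hx : x ∈ L)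
    (h : ¬Disjoint (a : B) x) : (a : B) ≤ x := by
  by_contra hax
  exact h (((ha.not_le_iff_disjoint (b := (⟨x, hx⟩ : L))).1 hax).map L.subtype)

def agreeBelow (Q : BooleanSubalgebra B) (a : B) : BooleanSubalgebra B where
  carrier := {x | ∃ c ∈ Q, a ⊓ x = a ⊓ c}
  supClosed' := by
    rintro x ⟨c, hc, hxc⟩ y ⟨d, hd, hyd⟩
    exact ⟨c ⊔ d, sup_mem hc hd, by rw [inf_sup_left, inf_sup_left, hxc, hyd]⟩
  infClosed' := by
    rintro x ⟨c, hc, hxc⟩ y ⟨d, hd, hyd⟩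
    refine ⟨c ⊓ d, inf_mem hc hd, ?_⟩
    rw [inf_inf_distrib_left, hxc, hyd, ← inf_inf_distrib_left]
  compl_mem' := by
    rintro x ⟨c, hc, hxc⟩
    exact ⟨cᶜ, compl_mem hc, by rw [← sdiff_eq, ← sdiff_eq, ← sdiff_inf_self_left, hxc,
      sdiff_inf_self_left]⟩
  bot_mem' := ⟨⊥, bot_mem, rfl⟩

end BooleanSubalgebra

open BooleanSubalgebra

variable {B : Type} [BooleanAlgebra B] {fa : B → B}

def IsS5.fixedSubalgebra (h : IsS5 fa) : BooleanSubalgebra B where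
  carrier := {c | fa c = c}
  supClosed' c hc d hd := le_antisymm (h.s4.le_self _) <| by
    conv_lhs => rw [← hc, ← hd]
    exact sup_le (h.s4.mono le_sup_left) (h.s4.mono le_sup_right)
  infClosed' c hc d hd := show fa (c ⊓ d) = c ⊓ d by
    rw [h.s4.map_inf, show fa c = c from hc, show fa d = d from hd]
  compl_mem' hc := h.fa_compl_of_fa_eq hc
  bot_mem' := le_bot_iff.1 (h.s4.le_self ⊥)

/-- Monadic algebras are locally finite. -/
theorem IsS5.exists_finite_subalgebra (h : IsS5 fa) {G : Set B} (hG : G.Finite) :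
    ∃ D : BooleanSubalgebra B, G ⊆ D ∧ (D : Set B).Finite ∧ ∀ d ∈ D, fa d ∈ D := by
  set D₀ := closure G
  set D := closure ((D₀ : Set B) ∪ fa '' D₀)
  have hD₀ : (D₀ : Set B).Finite := finite_closure hG
  have hD₀D : (D₀ : Set B) ⊆ D := subset_closure.trans' Set.subset_union_left
  have hfaD : ∀ d ∈ D₀, fa d ∈ D := fun d hd => subset_closure (Or.inr ⟨d, hd, rfl⟩)
  -- Below an atom `a` of `D₀`, every element of `D` agrees with an `fa`-fixed `c ∈ D`, and then
  -- `∃(a ⊓ c) = ∃a ⊓ c ∈ D`.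
  have hagree : ∀ a : D₀, IsAtom a → D ≤ (h.fixedSubalgebra ⊓ D).agreeBelow a := by
    intro a ha
    rw [closure_le]
    rintro x (hx | ⟨d, hd, rfl⟩)
    · by_cases hax : Disjoint (a : B) x
      · exact ⟨⊥, bot_mem, by rw [hax.eq_bot, inf_bot_eq]⟩
      · exact ⟨⊤, top_mem, by rw [inf_top_eq, inf_eq_left.2 (le_of_not_disjoint ha hx hax)]⟩
    · exact ⟨fa d, ⟨le_antisymm (h.s4.le_self _) (h.s4.le_idem d), hfaD d hd⟩, rfl⟩
  have hdia : ∀ x ∈ D, dia fa x ∈ D := by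
    intro x hx
    have := hD₀.to_subtype
    suffices ∀ e : D₀, dia fa (e ⊓ x) ∈ D by simpa using this ⊤
    refine atom_sup_induction (by simp [h.s4.dia_bot]) (fun a ha => ?_) (fun a b ha hb => ?_)
    · obtain ⟨c, ⟨hc, hcD⟩, hac⟩ := hagree a ha hx
      rw [hac, h.dia_inf_of_fa_eq hc]
      exact inf_mem (compl_mem (hfaD _ (compl_mem a.2))) hcD
    · rw [val_sup, inf_sup_right, h.s4.dia_sup]
      exact sup_mem ha hb
  refine ⟨D, subset_closure.trans hD₀D, finite_closure (hD₀.union (hD₀.image fa)), ?_⟩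
  intro d hd
  simpa [dia] using compl_mem (hdia _ (compl_mem hd))

end FiniteSubalgebra

section Kripke

variable {W : Type} {R E : W → W → Prop}

def relBox (R : W → W → Prop) (s : Set W) : Set W := {x | ∀ y, R x y → y ∈ s}

theorem isS4_relBox (hrefl : ∀ x, R x x) (htrans : ∀ x y z, R x y → R y z → R x z) :
    IsS4 (relBox R) where
  map_inf _ _ := Set.ext fun _ => forall₂_and
  map_top := Set.eq_univ_of_forall fun _ _ _ => trivial
  le_self _ x hx := hx x (hrefl x)
  le_idem _ x hx y hxy z hyz := hx z (htrans x y z hxy hyz)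

theorem isS5_relBox (hE : Equivalence E) : IsS5 (relBox E) where
  s4 := isS4_relBox hE.refl fun _ _ _ => hE.trans
  sym _ x hx _ hxy h := h x (hE.symm hxy) hx

theorem isS4t_relBox (hrefl : ∀ x, R x x) (htrans : ∀ x y z, R x y → R y z → R x z) :
    IsS4t (relBox R) (relBox (flip R)) where
  s4F := isS4_relBox hrefl htrans
  s4P := isS4_relBox hrefl fun x y z hxy hyz => htrans z y x hyz hxy
  pf _ x hx _ hyx h := h x hyx hx
  fp _ x hx _ hxy h := h x hxy hx

theorem isMS4t_relBox (hrefl : ∀ x, R x x) (htrans : ∀ x y z, R x y → R y z → R x z)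
    (hE : Equivalence E) (hcomm : ∀ x x' y', E x x' → R x' y' → ∃ y, R x y ∧ E y y') :
    IsMS4t (relBox R) (relBox (flip R)) (relBox E) where
  s4t := isS4t_relBox hrefl htrans
  ms4 :=
  { s4 := isS4_relBox hrefl htrans
    s5 := isS5_relBox hE
    comm s x hx x' hxx' y' hx'y' := by
      obtain ⟨y, hxy, hyy'⟩ := hcomm x x' y' hxx' hx'y'
      exact hx y hxy y' hyy' }

theorem Relation.ReflTransGen.exists_of_commute {r : W → W → Prop}
    (hcomm : ∀ x x' y', E x x' → r x' y' → ∃ y, r x y ∧ E y y') {x x' y' : W}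
    (hxx' : E x x') (hx'y' : Relation.ReflTransGen r x' y') :
    ∃ y, Relation.ReflTransGen r x y ∧ E y y' := by
  induction hx'y' with
  | refl => exact ⟨x, .refl, hxx'⟩
  | tail _ hr ih =>
    obtain ⟨z, hxz, hz⟩ := ih
    obtain ⟨y, hzy, hy⟩ := hcomm _ _ _ hz hr
    exact ⟨y, hxz.tail hzy, hy⟩

end Kripke

section Filtration

open BooleanSubalgebra

variable {B : Type} [BooleanAlgebra B] (D : BooleanSubalgebra B)

def Atm : Type := {x : D // IsAtom x}

instance [Finite D] : Finite (Atm D) := Subtype.finite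

instance : CoeOut (Atm D) B := ⟨fun x => x.1⟩

def diaRel (box : B → B) (x y : Atm D) : Prop := ¬Disjoint (x : B) (dia box y)

def emb (v : B) : Set (Atm D) := {x | (x : B) ≤ v}

variable {D}

theorem Atm.le_of_not_disjoint (x : Atm D) {v : B} (hv : v ∈ D) (h : ¬Disjoint (x : B) v) :
    (x : B) ≤ v :=
  BooleanSubalgebra.le_of_not_disjoint x.2 hv h

theorem Atm.ne_bot (x : Atm D) : (x : B) ≠ ⊥ := fun h => x.2.1 (Subtype.ext h)

theorem Atm.not_disjoint_of_le (x : Atm D) {v : B} (h : (x : B) ≤ v) : ¬Disjoint (x : B) v :=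
  fun hx => x.ne_bot (hx.eq_bot_of_le h)

theorem diaRel_refl {box : B → B} (h : IsS4 box) (x : Atm D) : diaRel D box x x :=
  x.not_disjoint_of_le (h.le_dia _)

theorem diaRel_le_box {box : B → B} (h : IsS4 box) {v : B} (hv : box v ∈ D) {x y : Atm D}
    (hxy : diaRel D box x y) (hx : (x : B) ≤ box v) : (y : B) ≤ box v :=
  y.le_of_not_disjoint hv fun hyv => h.not_disjoint_box hx hxy hyv.symm

theorem exists_atom_diaRel [Finite D] {box : B → B} (h : IsS4 box) {x v : B} (hv : v ∈ D)
    (hxv : ¬Disjoint x (dia box v)) :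
    ∃ y : Atm D, (y : B) ≤ v ∧ ¬Disjoint x (dia box y) := by
  suffices ∀ e : D, ¬Disjoint x (dia box e) →
      ∃ y : Atm D, (y : B) ≤ e ∧ ¬Disjoint x (dia box y) from this ⟨v, hv⟩ hxv
  refine atom_sup_induction (by simp [h.dia_bot])
    (fun a ha hxa => ⟨⟨a, ha⟩, le_rfl, hxa⟩) ?_
  intro a b ha hb hab
  rw [val_sup, h.dia_sup, disjoint_sup_right, not_and_or] at hab
  rcases hab with hxa | hxb
  · obtain ⟨y, hya, hy⟩ := ha hxa
    exact ⟨y, hya.trans le_sup_left, hy⟩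
  · obtain ⟨y, hyb, hy⟩ := hb hxb
    exact ⟨y, hyb.trans le_sup_right, hy⟩

theorem relBox_emb [Finite D] {box : B → B} (h : IsS4 box) {R : Atm D → Atm D → Prop}
    (hR : ∀ x y, diaRel D box x y → R x y) {v : B} (hv : v ∈ D) (hbv : box v ∈ D)
    (hpres : ∀ x y, R x y → (x : B) ≤ box v → (y : B) ≤ box v) :
    relBox R (emb D v) = emb D (box v) := by
  ext x
  refine ⟨fun hx => x.le_of_not_disjoint hbv fun hdis => ?_,
    fun hx y hxy => (hpres x y hxy hx).trans (h.le_self v)⟩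
  have hxv : ¬Disjoint (x : B) (dia box vᶜ) := by
    rw [disjoint_dia_iff, compl_compl]
    exact fun hle => x.ne_bot (hdis.eq_bot_of_le hle)
  obtain ⟨y, hyv, hxy⟩ := exists_atom_diaRel h (compl_mem hv) hxv
  exact y.ne_bot (le_bot_iff.1 ((le_inf (hx y (hR x y hxy)) hyv).trans (inf_compl_self v).le))

theorem diaRel_trans {box : B → B} (h : IsS4 box) {x y z : Atm D} (hz : dia box z ∈ D)
    (hxy : diaRel D box x y) (hyz : diaRel D box y z) : diaRel D box x z :=
  fun hxz => hxy <| hxz.mono_right <|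
    (h.dia_mono (y.le_of_not_disjoint hz hyz)).trans (h.dia_dia_le _)

theorem IsS5.diaRel_symm {fa : B → B} (h : IsS5 fa) {x y : Atm D} (hxy : diaRel D fa x y) :
    diaRel D fa y x :=
  fun hyx => hxy (h.s4.disjoint_dia_of_disjoint_dia h.sym hyx)

theorem IsS5.equivalence_diaRel {fa : B → B} (h : IsS5 fa) (hfa : ∀ d ∈ D, fa d ∈ D) :
    Equivalence (diaRel D fa) :=
  ⟨diaRel_refl h.s4, h.diaRel_symm,
    diaRel_trans h.s4 (compl_mem (hfa _ (compl_mem (Subtype.prop _))))⟩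

def futRel (bF : B → B) : Atm D → Atm D → Prop := Relation.ReflTransGen (diaRel D bF)

theorem emb_inf (v w : B) : emb D (v ⊓ w) = emb D v ⊓ emb D w := Set.ext fun _ => le_inf_iff

theorem emb_bot : emb D ⊥ = ⊥ := Set.ext fun x => iff_false_intro (mt le_bot_iff.1 x.ne_bot)

theorem emb_compl {v : B} (hv : v ∈ D) : emb D vᶜ = (emb D v)ᶜ := by
  ext x
  refine ⟨fun hx hxv => x.ne_bot (le_bot_iff.1 ((le_inf hxv hx).trans (inf_compl_self v).le)),
    fun hx => ?_⟩
  exact (not_not.1 (mt (x.le_of_not_disjoint hv) hx)).le_compl_right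

theorem emb_sup {v w : B} (hv : v ∈ D) (hw : w ∈ D) :
    emb D (v ⊔ w) = emb D v ⊔ emb D w := by
  rw [← compl_compl (v ⊔ w), compl_sup, emb_compl (inf_mem (compl_mem hv) (compl_mem hw)),
    emb_inf, emb_compl hv, emb_compl hw, compl_inf, compl_compl, compl_compl]

variable [Finite D] {bF bP fa : B → B}

theorem IsMS4.diaRel_commute (h : IsMS4 bF fa) (hfa : ∀ d ∈ D, fa d ∈ D) {x x' y' : Atm D}
    (hxx' : diaRel D fa x x') (hx'y' : diaRel D bF x' y') :
    ∃ y, diaRel D bF x y ∧ diaRel D fa y y' := by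
  have hdia : ∀ z : Atm D, dia fa z ∈ D := fun z => compl_mem (hfa _ (compl_mem z.1.2))
  have hx' : (x' : B) ≤ dia fa x := x'.le_of_not_disjoint (hdia x) (h.s5.diaRel_symm hxx')
  have hx : ¬Disjoint (x : B) (dia bF (dia fa y')) :=
    h.not_disjoint_dia_dia fun hd => hx'y' (hd.mono_left hx')
  obtain ⟨y, hyy', hxy⟩ := exists_atom_diaRel h.s4 (hdia y') hx
  exact ⟨y, hxy, y.not_disjoint_of_le hyy'⟩

theorem IsMS4t.filtration (h : IsMS4t bF bP fa) (hfa : ∀ d ∈ D, fa d ∈ D) :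
    IsMS4t (relBox (futRel bF)) (relBox (flip (futRel bF))) (relBox (diaRel D fa)) :=
  isMS4t_relBox (fun _ => .refl) (fun _ _ _ => .trans) (h.ms4.s5.equivalence_diaRel hfa)
    fun _ _ _ hxx' hx'y' =>
      hx'y'.exists_of_commute (fun _ _ _ => h.ms4.diaRel_commute hfa) hxx'

theorem emb_boxF (h : IsS4 bF) {v : B} (hv : v ∈ D) (hbv : bF v ∈ D) :
    relBox (futRel bF) (emb D v) = emb D (bF v) := by
  refine relBox_emb h (fun _ _ => .single) hv hbv fun x y hxy hx => ?_
  induction hxy with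
  | refl => exact hx
  | tail _ hyz ih => exact diaRel_le_box h hbv hyz ih

theorem emb_boxP (h : IsS4t bF bP) {v : B} (hv : v ∈ D) (hbv : bP v ∈ D) :
    relBox (flip (futRel bF)) (emb D v) = emb D (bP v) := by
  refine relBox_emb h.s4P
    (fun _ _ hxy => .single fun hyx => hxy (h.s4P.disjoint_dia_of_disjoint_dia h.pf hyx)) hv hbv
    fun x y hyx hx => ?_
  induction hyx using Relation.ReflTransGen.head_induction_on with
  | refl => exact hx
  | head hyz _ ih =>
    exact diaRel_le_box h.s4P hbv
      (fun hd => hyz (h.s4F.disjoint_dia_of_disjoint_dia h.fp hd)) ih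

theorem emb_fa (h : IsS4 fa) {v : B} (hv : v ∈ D) (hfv : fa v ∈ D) :
    relBox (diaRel D fa) (emb D v) = emb D (fa v) :=
  relBox_emb h (fun _ _ => id) hv hfv fun _ _ => diaRel_le_box h hfv

theorem emb_ne_top {v : B} (hv : v ∈ D) (hne : v ≠ ⊤) : emb D v ≠ ⊤ := by
  intro htop
  have hv' : (⟨vᶜ, compl_mem hv⟩ : D) ≠ ⊥ := fun h =>
    hne (compl_eq_bot.1 (congrArg Subtype.val h))
  obtain ⟨x, hx, hxv⟩ := (eq_bot_or_exists_atom_le _).resolve_left hv'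
  have hxv' : (⟨x, hx⟩ : Atm D) ∈ emb D v := by rw [htop]; trivial
  exact Atm.ne_bot ⟨x, hx⟩ (le_bot_iff.1 ((le_inf hxv' hxv).trans (inf_compl_self v).le))

end Filtration

def AForm.subformulas : AForm → List AForm
  | .var n => [.var n]
  | .bot => [.bot]
  | .and φ ψ => .and φ ψ :: (φ.subformulas ++ ψ.subformulas)
  | .or φ ψ => .or φ ψ :: (φ.subformulas ++ ψ.subformulas)
  | .imp φ ψ => .imp φ ψ :: (φ.subformulas ++ ψ.subformulas)
  | .boxF φ => .boxF φ :: φ.subformulas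
  | .boxP φ => .boxP φ :: φ.subformulas
  | .fa φ => .fa φ :: φ.subformulas

theorem AForm.mem_subformulas_self (φ : AForm) : φ ∈ φ.subformulas := by
  cases φ <;> simp [subformulas]

theorem aeval_filtration {B : Type} [BooleanAlgebra B] {bF bP fa : B → B} (h : IsMS4t bF bP fa)
    {D : BooleanSubalgebra B} [Finite D] (v : ℕ → B) (φ : AForm)
    (hφ : ∀ ψ ∈ φ.subformulas, aeval bF bP fa v ψ ∈ D) :
    aeval (relBox (futRel bF)) (relBox (flip (futRel bF))) (relBox (diaRel D fa)) (emb D ∘ v) φ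
      = emb D (aeval bF bP fa v φ) := by
  have hmem (ψ : AForm) (hψ : ∀ χ ∈ ψ.subformulas, aeval bF bP fa v χ ∈ D) :
      aeval bF bP fa v ψ ∈ D :=
    hψ ψ ψ.mem_subformulas_self
  induction φ with
  | var n => rfl
  | bot => exact emb_bot.symm
  | and φ ψ ih₁ ih₂ =>
    simp only [AForm.subformulas, List.forall_mem_cons, List.forall_mem_append] at hφ
    simp only [aeval, ih₁ hφ.2.1, ih₂ hφ.2.2, emb_inf]
  | or φ ψ ih₁ ih₂ =>
    simp only [AForm.subformulas, List.forall_mem_cons, List.forall_mem_append] at hφ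
    simp only [aeval, ih₁ hφ.2.1, ih₂ hφ.2.2, emb_sup (hmem φ hφ.2.1) (hmem ψ hφ.2.2)]
  | imp φ ψ ih₁ ih₂ =>
    simp only [AForm.subformulas, List.forall_mem_cons, List.forall_mem_append] at hφ
    simp only [aeval, ih₁ hφ.2.1, ih₂ hφ.2.2, emb_compl (hmem φ hφ.2.1),
      emb_sup (BooleanSubalgebra.compl_mem (hmem φ hφ.2.1)) (hmem ψ hφ.2.2)]
  | boxF φ ih =>
    simp only [AForm.subformulas, List.forall_mem_cons] at hφ
    simp only [aeval, ih hφ.2, emb_boxF h.s4t.s4F (hmem φ hφ.2) hφ.1]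
  | boxP φ ih =>
    simp only [AForm.subformulas, List.forall_mem_cons] at hφ
    simp only [aeval, ih hφ.2, emb_boxP h.s4t (hmem φ hφ.2) hφ.1]
  | fa φ ih =>
    simp only [AForm.subformulas, List.forall_mem_cons] at hφ
    simp only [aeval, ih hφ.2, emb_fa h.ms4.s5.s4 (hmem φ hφ.2) hφ.1]

/-- `MS4.t` has the finite model property: every formula not
provable in `MS4.t` is refuted in a finite MS4.t-algebra under some assignment. -/
theorem MS4t_fmp (φ : AForm) (h : ¬ MS4t φ) :
    ∃ (B : Type) (_ : BooleanAlgebra B) (bF bP fa : B → B),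
      Finite B ∧ IsMS4t bF bP fa ∧ ∃ v : Nat → B, aeval bF bP fa v φ ≠ ⊤ := by
  set v : ℕ → Lindenbaum := fun n => Lindenbaum.mk (.var n)
  set val := aeval Lindenbaum.boxF Lindenbaum.boxP Lindenbaum.fa v
  obtain ⟨D, hGD, hD, hfa⟩ := Lindenbaum.isMS4t.ms4.s5.exists_finite_subalgebra
    ((List.finite_toSet φ.subformulas).image val)
  have := hD.to_subtype
  have hsub : ∀ ψ ∈ φ.subformulas, val ψ ∈ D := fun ψ hψ => hGD ⟨ψ, hψ, rfl⟩
  refine ⟨Set (Atm D), inferInstance, _, _, _, inferInstance, Lindenbaum.isMS4t.filtration hfa,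
    emb D ∘ v, ?_⟩
  rw [aeval_filtration Lindenbaum.isMS4t v φ hsub]
  refine emb_ne_top (hsub φ φ.mem_subformulas_self) fun htop => h (Lindenbaum.mk_eq_top ?_)
  rwa [← Lindenbaum.aeval_mk]
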